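/- Fix t > 1 and ρ ≥ 0. Let x be a word in {t, t̄}. Then u_x annihilates every partition λ with λ'_{t-1} − λ'_{t+1} = ρ if and only if α_{t-1}(x) + α_t(x) > ρ. -/

import Mathlib

/-- Alphabet Γ = ℕ ∪ ℕ̄ : a letter is `(false, i)` for unbarred `i` (up-operator)
and `(true, i)` for barred `ī` (down-operator); indices of interest are `i ≥ 1`. -/
abbrev Γ : Type := Bool × ℕ

/-- `c : ℕ → ℕ` records the column lengths `λ'_i` (for `i ≥ 1`) of a partition:
nonincreasing, eventually zero; `c 0 = 0` is a normalization. -/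
def IsPartition (c : ℕ → ℕ) : Prop :=
  (∀ i, 1 ≤ i → c (i + 1) ≤ c i) ∧ c 0 = 0 ∧ ∃ N, ∀ i, N ≤ i → c i = 0

open scoped Classical in
/-- The up-operator `u_i`: add a box to column `i` if the result is a partition, else `0` (`none`). -/
noncomputable def upFun (i : ℕ) (c : ℕ → ℕ) : Option (ℕ → ℕ) :=
  if 1 ≤ i ∧ IsPartition (Function.update c i (c i + 1)) then
    some (Function.update c i (c i + 1)) else none

open scoped Classical in
/-- The down-operator `d_i`: remove a box from column `i` if the result is a partition, else `0`. -/
noncomputable def downFun (i : ℕ) (c : ℕ → ℕ) : Option (ℕ → ℕ) :=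
  if 1 ≤ i ∧ 1 ≤ c i ∧ IsPartition (Function.update c i (c i - 1)) then
    some (Function.update c i (c i - 1)) else none

/-- `u_i` extended to `0` (operators applied to `0` give `0`). -/
noncomputable def U (i : ℕ) (o : Option (ℕ → ℕ)) : Option (ℕ → ℕ) := o.bind (upFun i)

/-- `d_i` extended to `0`. -/
noncomputable def D (i : ℕ) (o : Option (ℕ → ℕ)) : Option (ℕ → ℕ) := o.bind (downFun i)

/-- The action `u_x` of a word `x` on (possibly zero) partitions, rightmost letter acting first. -/
noncomputable def act (x : List Γ) (o : Option (ℕ → ℕ)) : Option (ℕ → ℕ) :=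
  x.foldr (fun l o => if l.1 then D l.2 o else U l.2 o) o

/-- The weight `w_j(x)`: occurrences of `j` minus occurrences of `j̄` in `x`. -/
def wt (j : ℕ) (x : List Γ) : ℤ :=
  (x.count ((false, j) : Γ) : ℤ) - (x.count ((true, j) : Γ) : ℤ)

/-- `α_i(x)`: the maximum of `w_{i+1}(x̃) - w_i(x̃)` over all suffix subwords `x̃` of `x`
(including the empty suffix, which contributes `0`). -/
def alphaV (i : ℕ) (x : List Γ) : ℤ :=
  (x.tails.map (fun s => wt (i + 1) s - wt i s)).foldr max 0

/-! A word in the letters `t`, `t̄` changes only column `t`: once a suffix `s` has acted, that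
column has length `λ'_t + w_t(s)`, and every step is defined exactly when this value stays between
`λ'_{t+1}` and `λ'_{t-1}`. So `u_x λ ≠ 0` iff `α_{t-1}(x) ≤ λ'_{t-1} - λ'_t` and
`α_t(x) ≤ λ'_t - λ'_{t+1}`. Adding them forces `α_{t-1}(x) + α_t(x) ≤ ρ`; conversely, if this
holds, the partition with `λ'_{t-1} = ρ`, `λ'_t = α_t(x)`, `λ'_{t+1} = 0` survives. -/

theorem List.foldr_max_le_iff {α : Type*} [LinearOrder α] {l : List α} {b m : α} :
    l.foldr max b ≤ m ↔ b ≤ m ∧ ∀ a ∈ l, a ≤ m := by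
  induction l with
  | nil => simp
  | cons a l ih => simp only [List.foldr_cons, max_le_iff, ih, List.forall_mem_cons]; tauto

open Function

theorem isPartition_update_iff {t : ℕ} (ht : 1 < t) {c : ℕ → ℕ} (hc : IsPartition c) (v : ℕ) :
    IsPartition (update c t v) ↔ c (t + 1) ≤ v ∧ v ≤ c (t - 1) := by
  obtain ⟨hmono, hc0, N, hN⟩ := hc
  constructor
  · rintro ⟨hmono', -, -⟩
    have hleft := hmono' (t - 1) (by omega)
    have hright := hmono' t (by omega)
    rw [Nat.sub_add_cancel ht.le, update_self, update_of_ne (by omega)] at hleft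
    rw [update_self, update_of_ne (by omega)] at hright
    exact ⟨hright, hleft⟩
  · rintro ⟨hlo, hhi⟩
    refine ⟨fun i hi => ?_, by rwa [update_of_ne (by omega)], max N (t + 1), fun i hi => ?_⟩
    · rcases lt_trichotomy i (t - 1) with h | h | h
      · rw [update_of_ne (by omega), update_of_ne (by omega)]; exact hmono i hi
      · subst h; rw [Nat.sub_add_cancel ht.le, update_self, update_of_ne (by omega)]; exact hhi
      · rcases eq_or_ne i t with rfl | h'
        · rw [update_self, update_of_ne (by omega)]; exact hlo
        · rw [update_of_ne (by omega), update_of_ne (by omega)]; exact hmono i hi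
    · rw [update_of_ne (by omega)]; exact hN i (by omega)

theorem exists_isPartition_of_le {t : ℕ} (ht : 1 < t) {a b : ℕ} (hba : b ≤ a) :
    ∃ c, IsPartition c ∧ c (t - 1) = a ∧ c t = b ∧ c (t + 1) = 0 := by
  refine ⟨fun i => if i = 0 then 0 else if i < t then a else if i = t then b else 0,
    ⟨fun i hi => ?_, rfl, t + 1, fun i hi => ?_⟩, ?_, ?_, ?_⟩ <;> simp only <;> split_ifs <;> omega


theorem wt_up_cons (t : ℕ) (x : List Γ) : wt t ((false, t) :: x) = wt t x + 1 := by
  simp only [wt, List.count_cons_self,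
    List.count_cons_of_ne (by simp : ((false, t) : Γ) ≠ (true, t))]
  push_cast; ring

theorem wt_down_cons (t : ℕ) (x : List Γ) : wt t ((true, t) :: x) = wt t x - 1 := by
  simp only [wt, List.count_cons_self,
    List.count_cons_of_ne (by simp : ((true, t) : Γ) ≠ (false, t))]
  push_cast; ring

theorem wt_eq_zero_of_forall_mem {t j : ℕ} {x : List Γ} (hx : ∀ l ∈ x, l.2 = t) (hj : j ≠ t) :
    wt j x = 0 := by
  have hnot : ∀ b : Bool, (b, j) ∉ x := fun b h => hj (hx _ h)
  simp [wt, List.count_eq_zero.mpr (hnot false), List.count_eq_zero.mpr (hnot true)]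

theorem upFun_update {t : ℕ} (ht : 1 < t) {c : ℕ → ℕ} (hc : IsPartition c) (n : ℕ) :
    upFun t (update c t n) =
      if c (t + 1) ≤ n + 1 ∧ n + 1 ≤ c (t - 1) then some (update c t (n + 1)) else none := by
  simp only [upFun, update_self, update_idem, isPartition_update_iff ht hc, ht.le, true_and]

theorem downFun_update {t : ℕ} (ht : 1 < t) {c : ℕ → ℕ} (hc : IsPartition c) (n : ℕ) :
    downFun t (update c t n) =
      if 1 ≤ n ∧ c (t + 1) ≤ n - 1 ∧ n - 1 ≤ c (t - 1) then some (update c t (n - 1))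
      else none := by
  simp only [downFun, update_self, update_idem, isPartition_update_iff ht hc, ht.le, true_and]

def StaysBetween (c : ℕ → ℕ) (t : ℕ) (x : List Γ) : Prop :=
  ∀ s ∈ x.tails, (c (t + 1) : ℤ) ≤ c t + wt t s ∧ c t + wt t s ≤ c (t - 1)

theorem staysBetween_cons {c : ℕ → ℕ} {t : ℕ} {a : Γ} {x : List Γ} :
    StaysBetween c t (a :: x) ↔
      ((c (t + 1) : ℤ) ≤ c t + wt t (a :: x) ∧ c t + wt t (a :: x) ≤ c (t - 1)) ∧
        StaysBetween c t x := by
  simp only [StaysBetween, List.tails_cons, List.forall_mem_cons]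

theorem act_cons (a : Γ) (x : List Γ) (o : Option (ℕ → ℕ)) :
    act (a :: x) o = if a.1 then D a.2 (act x o) else U a.2 (act x o) :=
  rfl

open scoped Classical in
theorem act_eq_ite {t : ℕ} (ht : 1 < t) {c : ℕ → ℕ} (hc : IsPartition c) {x : List Γ}
    (hx : ∀ l ∈ x, l.2 = t) :
    act x (some c) =
      if StaysBetween c t x then some (update c t (c t + wt t x).toNat) else none := by
  induction x with
  | nil =>
    have hlo := hc.1 t (by omega)
    have hhi := hc.1 (t - 1) (by omega)
    rw [Nat.sub_add_cancel ht.le] at hhi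
    simp [act, StaysBetween, wt, hlo, hhi]
  | cons a x ih =>
    obtain ⟨b, j⟩ := a
    obtain rfl : j = t := hx _ List.mem_cons_self
    rw [act_cons, ih fun l hl => hx l (List.mem_cons_of_mem _ hl), staysBetween_cons]
    by_cases hstay : StaysBetween c j x
    · obtain ⟨hlo, -⟩ := hstay x ((List.mem_tails x x).mpr (List.suffix_refl x))
      have hn : (((c j + wt j x).toNat : ℕ) : ℤ) = c j + wt j x := Int.toNat_of_nonneg (by omega)
      cases b
      · simp only [hstay, and_true, Bool.false_eq_true, ↓reduceIte, U, Option.bind_some,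
          upFun_update ht hc, wt_up_cons]
        split_ifs <;> first | rfl | omega | (congr 2; omega)
      · simp only [hstay, and_true, ↓reduceIte, D, Option.bind_some, downFun_update ht hc,
          wt_down_cons]
        split_ifs <;> first | rfl | omega | (congr 2; omega)
    · simp only [hstay, if_false, and_false]
      cases b <;> rfl

theorem alphaV_nonneg (i : ℕ) (x : List Γ) : 0 ≤ alphaV i x :=
  List.le_max_of_le' 0 (List.mem_map_of_mem (f := fun s => wt (i + 1) s - wt i s)
    ((List.mem_tails [] x).mpr List.nil_suffix)) (by simp [wt])

theorem alphaV_le_iff {i : ℕ} {x : List Γ} {m : ℤ} :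
    alphaV i x ≤ m ↔ ∀ s ∈ x.tails, wt (i + 1) s - wt i s ≤ m := by
  rw [alphaV, List.foldr_max_le_iff, List.forall_mem_map]
  refine ⟨And.right, fun h => ⟨?_, h⟩⟩
  simpa [wt] using h [] ((List.mem_tails [] x).mpr List.nil_suffix)

section SingleColumn

variable {t : ℕ} {x : List Γ}

theorem forall_mem_of_mem_tails (hx : ∀ l ∈ x, l.2 = t) {s : List Γ} (hs : s ∈ x.tails) :
    ∀ l ∈ s, l.2 = t :=
  fun l hl => hx l (((List.mem_tails s x).mp hs).subset hl)

theorem alphaV_sub_one_le_iff (ht : 1 ≤ t) (hx : ∀ l ∈ x, l.2 = t) {m : ℤ} :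
    alphaV (t - 1) x ≤ m ↔ ∀ s ∈ x.tails, wt t s ≤ m := by
  rw [alphaV_le_iff, Nat.sub_add_cancel ht]
  refine forall₂_congr fun s hs => ?_
  rw [wt_eq_zero_of_forall_mem (j := t - 1) (forall_mem_of_mem_tails hx hs) (by omega), sub_zero]

theorem alphaV_le_iff_of_forall_mem (hx : ∀ l ∈ x, l.2 = t) {m : ℤ} :
    alphaV t x ≤ m ↔ ∀ s ∈ x.tails, -wt t s ≤ m := by
  rw [alphaV_le_iff]
  refine forall₂_congr fun s hs => ?_
  rw [wt_eq_zero_of_forall_mem (j := t + 1) (forall_mem_of_mem_tails hx hs) (by omega), zero_sub]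

theorem staysBetween_iff (ht : 1 ≤ t) (hx : ∀ l ∈ x, l.2 = t) (c : ℕ → ℕ) :
    StaysBetween c t x ↔
      alphaV (t - 1) x ≤ c (t - 1) - c t ∧ alphaV t x ≤ c t - c (t + 1) := by
  rw [alphaV_sub_one_le_iff ht hx, alphaV_le_iff_of_forall_mem hx, StaysBetween, ← forall₂_and]
  refine forall₂_congr fun s _ => ?_
  constructor <;> rintro ⟨h₁, h₂⟩ <;> constructor <;> omega

theorem act_ne_none_iff (ht : 1 < t) {c : ℕ → ℕ} (hc : IsPartition c)
    (hx : ∀ l ∈ x, l.2 = t) :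
    act x (some c) ≠ none ↔
      alphaV (t - 1) x ≤ c (t - 1) - c t ∧ alphaV t x ≤ c t - c (t + 1) := by
  rw [act_eq_ite ht hc hx, ← staysBetween_iff ht.le hx]
  split_ifs with h <;> simp [h]

end SingleColumn

theorem annihilates_chain_iff (t : ℕ) (ht : 1 < t) (ρ : ℕ) (x : List Γ)
    (hx : ∀ l ∈ x, l.2 = t) :
    (∀ c : ℕ → ℕ, IsPartition c → (c (t - 1) : ℤ) - (c (t + 1) : ℤ) = ρ →
        act x (some c) = none) ↔
      (ρ : ℤ) < alphaV (t - 1) x + alphaV t x := by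
  have hα₁ := alphaV_nonneg (t - 1) x
  have hα₂ := alphaV_nonneg t x
  constructor
  · intro hann
    by_contra! hle
    obtain ⟨c, hc, hc₁, hc₂, hc₃⟩ :=
      exists_isPartition_of_le ht (a := ρ) (b := (alphaV t x).toNat) (by omega)
    refine (act_ne_none_iff ht hc hx).mpr ⟨by omega, by omega⟩ (hann c hc ?_)
    simp [hc₁, hc₃]
  · intro hlt c hc hwidth
    by_contra hne
    obtain ⟨h₁, h₂⟩ := (act_ne_none_iff ht hc hx).mp hne
    omega
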